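/- Let N be a positive integer, w : ℝ → [0,∞) a nonnegative function, and p_0, …, p_{N−1} real polynomials with deg p_j = j and leading coefficient k_j ≠ 0. Set φ_j(x) := √(w(x)) · p_j(x) and K_N(x,y) := ∑_{j=0}^{N−1} φ_j(x) φ_j(y). Then for all real x_1, …, x_N: ∏_{1≤j<k≤N} (x_j − x_k)² · ∏_{j=1}^{N} w(x_j) = (∏_{j=0}^{N−1} k_j)^{−2} · det( K_N(x_i, x_j) )_{i,j=1}^{N}. -/

import Mathlib

/-! With `φ_j = √w · p_j`, the kernel matrix `(K_N(x_i, x_j))` is the Gram matrix `Φ Φᵀ` of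
`Φ = (φ_j(x_i))`, so its determinant is `det Φ ²`. Pulling `√w(x_i)` out of row `i` leaves
`(p_j(x_i))`, which factors as the Vandermonde matrix times the upper triangular matrix of
coefficients of the `p_j`; its diagonal is the leading coefficients. -/

open Finset Polynomial

namespace Matrix

variable {R : Type*} [CommRing R]

theorem det_of_sum_mul_eq_det_sq {n α : Type*} [Fintype n] [DecidableEq n]
    (f : n → α → R) (x : n → α) :
    (of fun i j => ∑ k, f k (x i) * f k (x j)).det = (of fun i k => f k (x i)).det ^ 2 := by
  have hGram : (of fun i j => ∑ k, f k (x i) * f k (x j))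
      = of (fun i k => f k (x i)) * (of fun i k => f k (x i))ᵀ := by
    ext i j
    simp only [of_apply, mul_apply, transpose_apply]
  rw [hGram, det_mul, det_transpose, sq]

theorem det_eval_matrixOfPolynomials {n : ℕ} (v : Fin n → R) (p : Fin n → R[X])
    (h_deg : ∀ i, (p i).natDegree ≤ i) :
    (of fun i j => (p j).eval (v i)).det = (vandermonde v).det * ∏ i, (p i).coeff i := by
  rw [eval_matrixOfPolynomials_eq_vandermonde_mul_matrixOfPolynomials v p h_deg, det_mul,
    det_of_isUpperTriangular (matrixOfPolynomials_blockTriangular p h_deg)]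
  rfl

theorem det_vandermonde_sq {n : ℕ} (v : Fin n → R) :
    (vandermonde v).det ^ 2
      = ∏ q ∈ univ.filter (fun q : Fin n × Fin n => q.1 < q.2), (v q.1 - v q.2) ^ 2 := by
  rw [prod_filter, Fintype.prod_prod_type, det_vandermonde, ← prod_pow]
  refine prod_congr rfl fun i _ => ?_
  rw [← prod_pow, ← prod_filter, filter_lt_eq_Ioi]
  exact prod_congr rfl fun j _ => by ring

end Matrix

open Matrix

theorem vandermonde_sq_weight_eq_det_kernel (N : ℕ)
    (w : ℝ → ℝ) (hw : ∀ x, 0 ≤ w x)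
    (p : Fin N → Polynomial ℝ)
    (hdeg : ∀ j, (p j).natDegree = (j : ℕ))
    (hlead : ∀ j, (p j).leadingCoeff ≠ 0)
    (φ : Fin N → ℝ → ℝ)
    (hφ : ∀ j x, φ j x = Real.sqrt (w x) * (p j).eval x)
    (K : ℝ → ℝ → ℝ)
    (hK : ∀ x y, K x y = ∑ j : Fin N, φ j x * φ j y)
    (x : Fin N → ℝ) :
    (∏ q ∈ Finset.univ.filter (fun q : Fin N × Fin N => q.1 < q.2), (x q.1 - x q.2) ^ 2) *
        ∏ j : Fin N, w (x j)
      = ((∏ j : Fin N, (p j).leadingCoeff) ^ 2)⁻¹ *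
          (Matrix.of fun i j : Fin N => K (x i) (x j)).det := by
  have hcoeff : ∀ j, (p j).coeff j = (p j).leadingCoeff := fun j => by
    rw [leadingCoeff, hdeg]
  have hsqrt : (∏ i, √(w (x i))) ^ 2 = ∏ i, w (x i) := by
    rw [← prod_pow]
    exact prod_congr rfl fun i _ => Real.sq_sqrt (hw (x i))
  have hk : (∏ j, (p j).leadingCoeff) ^ 2 ≠ 0 :=
    pow_ne_zero _ (prod_ne_zero_iff.mpr fun j _ => hlead j)
  rw [eq_inv_mul_iff_mul_eq₀ hk]
  calc _ = ((∏ i, √(w (x i))) * ((vandermonde x).det * ∏ j, (p j).leadingCoeff)) ^ 2 := by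
        rw [mul_pow, hsqrt, mul_pow, det_vandermonde_sq]
        ring
    _ = (of fun i k => φ k (x i)).det ^ 2 := by
        simp only [hφ, ← hcoeff]
        rw [← det_eval_matrixOfPolynomials x p fun j => (hdeg j).le, ← det_mul_column]
        rfl
    _ = _ := by
        simp only [hK]
        exact (det_of_sum_mul_eq_det_sq φ x).symm
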